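/- arXiv:1706.02040 — 3 statements merged into one kernel-verified Lean document; each statement's English description precedes it below -/
import Mathlib

section
/- If a Markov kernel P on a Polish space satisfies the Doeblin condition ‖P(x,·) − P(y,·)‖_TV ≤ 1−a for all x,y and some a ∈ (0,1), then for any two initial probability measures ν₁, ν₂ one has ‖ν₁Pⁿ − ν₂Pⁿ‖_TV ≤ (1−a)ⁿ‖ν₁ − ν₂‖_TV for all n ≥ 0. -/
open MeasureTheory ProbabilityTheory Filter
open scoped ENNReal

/-- Total variation distance between two measures. -/
noncomputable def tvDist {X : Type*} [MeasurableSpace X] (μ ν : Measure X) : ℝ :=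
  ⨆ s : {s : Set X // MeasurableSet s}, |(μ s.1).toReal - (ν s.1).toReal|

/-- One step of a Markov kernel acting on a measure. -/
noncomputable def stepK {X : Type*} [MeasurableSpace X] (κ : Kernel X X) (ν : Measure X) :
    Measure X :=
  ν.bind (fun x => κ x)

/-!
Take a Hahn set `D` for `μ` and `ν`. Then `α = μ|D - ν|D` and `β = ν|Dᶜ - μ|Dᶜ` satisfy
`μ + β = ν + α` and have the same total mass `μ D - ν D ≤ tvDist μ ν`. Under the Doeblin
condition `f = fun x => κ x s` oscillates by at most `c`, so
`∫ f ∂α ≤ (⨅ f + c) α univ ≤ ∫ f ∂β + c α univ`, hence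
`stepK κ μ s ≤ stepK κ ν s + c tvDist μ ν`. By symmetry one step contracts `tvDist` by `c`,
and iterating gives `c ^ n`.
-/

section

variable {X : Type*} [MeasurableSpace X]

lemma tvDist_bddAbove (μ ν : Measure X) [IsFiniteMeasure μ] [IsFiniteMeasure ν] :
    BddAbove (Set.range fun s : {s : Set X // MeasurableSet s} =>
      |(μ s.1).toReal - (ν s.1).toReal|) := by
  refine ⟨(μ Set.univ).toReal + (ν Set.univ).toReal, ?_⟩
  rintro _ ⟨s, rfl⟩
  refine (abs_sub _ _).trans ?_
  simp only [abs_of_nonneg ENNReal.toReal_nonneg]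
  gcongr <;> simp [measure_ne_top]

lemma abs_sub_le_tvDist (μ ν : Measure X) [IsFiniteMeasure μ] [IsFiniteMeasure ν]
    {s : Set X} (hs : MeasurableSet s) :
    |(μ s).toReal - (ν s).toReal| ≤ tvDist μ ν :=
  le_ciSup (tvDist_bddAbove μ ν) ⟨s, hs⟩

lemma tvDist_nonneg (μ ν : Measure X) [IsFiniteMeasure μ] [IsFiniteMeasure ν] :
    0 ≤ tvDist μ ν :=
  (abs_nonneg _).trans (abs_sub_le_tvDist μ ν MeasurableSet.empty)

lemma tvDist_comm (μ ν : Measure X) : tvDist μ ν = tvDist ν μ := by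
  simp only [tvDist, abs_sub_comm]

lemma apply_le_add_of_tvDist_le {μ ν : Measure X} [IsFiniteMeasure μ] [IsFiniteMeasure ν]
    {r : ℝ} (h : tvDist μ ν ≤ r) {s : Set X} (hs : MeasurableSet s) :
    μ s ≤ ν s + ENNReal.ofReal r := by
  have hreal : (μ s).toReal ≤ (ν s).toReal + r := by
    linarith [le_abs_self ((μ s).toReal - (ν s).toReal), abs_sub_le_tvDist μ ν hs]
  calc μ s = ENNReal.ofReal (μ s).toReal := (ENNReal.ofReal_toReal (measure_ne_top μ s)).symm
    _ ≤ ENNReal.ofReal ((ν s).toReal + r) := ENNReal.ofReal_le_ofReal hreal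
    _ ≤ ENNReal.ofReal (ν s).toReal + ENNReal.ofReal r := ENNReal.ofReal_add_le
    _ = ν s + ENNReal.ofReal r := by rw [ENNReal.ofReal_toReal (measure_ne_top ν s)]

lemma tvDist_le_of_forall_apply_le_add {μ ν : Measure X} [IsFiniteMeasure μ]
    [IsFiniteMeasure ν] {r : ℝ} (hr : 0 ≤ r)
    (hμν : ∀ s, MeasurableSet s → μ s ≤ ν s + ENNReal.ofReal r)
    (hνμ : ∀ s, MeasurableSet s → ν s ≤ μ s + ENNReal.ofReal r) :
    tvDist μ ν ≤ r := by
  have toReal_le {m m' : Measure X} [IsFiniteMeasure m'] {s : Set X}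
      (h : m s ≤ m' s + ENNReal.ofReal r) : (m s).toReal ≤ (m' s).toReal + r := by
    simpa [ENNReal.toReal_ofReal hr] using
      ENNReal.toReal_le_add' h (fun h => (measure_ne_top m' s h).elim) (by simp)
  refine ciSup_le fun ⟨s, hs⟩ => abs_sub_le_iff.2 ⟨?_, ?_⟩
  · linarith [toReal_le (hμν s hs)]
  · linarith [toReal_le (hνμ s hs)]

lemma exists_add_eq_add_apply_univ_le_tvDist (μ ν : Measure X) [IsFiniteMeasure μ]
    [IsFiniteMeasure ν] :
    ∃ α β : Measure X, μ + β = ν + α ∧ α Set.univ ≤ ENNReal.ofReal (tvDist μ ν) := by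
  obtain ⟨D, hD, hνμ, hμν⟩ := hahn_decomposition μ ν
  have hle : ν.restrict D ≤ μ.restrict D := Measure.le_iff.2 fun t ht => by
    simpa only [Measure.restrict_apply ht] using hνμ _ (ht.inter hD) Set.inter_subset_right
  have hle' : μ.restrict Dᶜ ≤ ν.restrict Dᶜ := Measure.le_iff.2 fun t ht => by
    simpa only [Measure.restrict_apply ht] using hμν _ (ht.inter hD.compl) Set.inter_subset_right
  refine ⟨μ.restrict D - ν.restrict D, ν.restrict Dᶜ - μ.restrict Dᶜ, ?_, ?_⟩
  · calc μ + (ν.restrict Dᶜ - μ.restrict Dᶜ)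
        = μ.restrict D + ((ν.restrict Dᶜ - μ.restrict Dᶜ) + μ.restrict Dᶜ) := by
          rw [add_comm _ (μ.restrict Dᶜ), ← add_assoc, Measure.restrict_add_restrict_compl hD]
      _ = ((μ.restrict D - ν.restrict D) + ν.restrict D) + ν.restrict Dᶜ := by
          rw [Measure.sub_add_cancel_of_le hle, Measure.sub_add_cancel_of_le hle']
      _ = ν + (μ.restrict D - ν.restrict D) := by
          rw [add_assoc, Measure.restrict_add_restrict_compl hD, add_comm]
  · rw [Measure.sub_apply .univ hle, Measure.restrict_apply_univ, Measure.restrict_apply_univ,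
      tsub_le_iff_left]
    exact apply_le_add_of_tvDist_le le_rfl hD

lemma lintegral_le_lintegral_add_mul_tvDist (μ ν : Measure X) [IsProbabilityMeasure μ]
    [IsProbabilityMeasure ν] {f : X → ℝ≥0∞} (hf_top : ∀ x, f x ≠ ∞) {c : ℝ≥0∞}
    (hf : ∀ x y, f x ≤ f y + c) :
    ∫⁻ x, f x ∂μ ≤ ∫⁻ x, f x ∂ν + c * ENNReal.ofReal (tvDist μ ν) := by
  obtain ⟨α, β, hadd, hα⟩ := exists_add_eq_add_apply_univ_le_tvDist μ ν
  have hβ : β Set.univ = α Set.univ := by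
    simpa [measure_univ] using congrArg (· Set.univ) hadd
  obtain ⟨x₀⟩ := nonempty_of_isProbabilityMeasure μ
  set I := ⨅ y, f y
  have hI : I ≠ ∞ := ne_top_of_le_ne_top (hf_top x₀) (iInf_le f x₀)
  have hαI : α Set.univ ≠ ∞ := ne_top_of_le_ne_top ENNReal.ofReal_ne_top hα
  have upper : ∫⁻ x, f x ∂α ≤ (I + c) * α Set.univ := by
    rw [← lintegral_const, ENNReal.iInf_add]
    exact lintegral_mono fun x => le_iInf fun y => hf x y
  have lower : I * α Set.univ ≤ ∫⁻ x, f x ∂β := by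
    rw [← hβ, ← lintegral_const]
    exact lintegral_mono fun x => iInf_le f x
  have key : ∫⁻ x, f x ∂μ + I * α Set.univ ≤ ∫⁻ x, f x ∂ν + c * α Set.univ + I * α Set.univ :=
    calc ∫⁻ x, f x ∂μ + I * α Set.univ ≤ ∫⁻ x, f x ∂μ + ∫⁻ x, f x ∂β := by gcongr
      _ = ∫⁻ x, f x ∂ν + ∫⁻ x, f x ∂α := by
        rw [← lintegral_add_measure, hadd, lintegral_add_measure]
      _ ≤ ∫⁻ x, f x ∂ν + (I + c) * α Set.univ := by gcongr
      _ = ∫⁻ x, f x ∂ν + c * α Set.univ + I * α Set.univ := by ring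
  calc ∫⁻ x, f x ∂μ ≤ ∫⁻ x, f x ∂ν + c * α Set.univ :=
        ENNReal.le_of_add_le_add_right (ENNReal.mul_ne_top hI hαI) key
    _ ≤ ∫⁻ x, f x ∂ν + c * ENNReal.ofReal (tvDist μ ν) := by gcongr

instance (κ : Kernel X X) [IsMarkovKernel κ] (ν : Measure X) [IsProbabilityMeasure ν] :
    IsProbabilityMeasure (stepK κ ν) :=
  inferInstanceAs (IsProbabilityMeasure (κ ∘ₘ ν))

lemma stepK_apply (κ : Kernel X X) (ν : Measure X) {s : Set X} (hs : MeasurableSet s) :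
    stepK κ ν s = ∫⁻ x, κ x s ∂ν :=
  Measure.bind_apply hs κ.aemeasurable

variable {κ : Kernel X X} [IsMarkovKernel κ] {c : ℝ}

lemma nonneg_of_forall_tvDist_le [Nonempty X] (hκ : ∀ x y, tvDist (κ x) (κ y) ≤ c) : 0 ≤ c :=
  (tvDist_nonneg _ _).trans (hκ Classical.ofNonempty Classical.ofNonempty)

lemma stepK_apply_le_add (hκ : ∀ x y, tvDist (κ x) (κ y) ≤ c) (hc : 0 ≤ c)
    (μ ν : Measure X) [IsProbabilityMeasure μ] [IsProbabilityMeasure ν]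
    {s : Set X} (hs : MeasurableSet s) :
    stepK κ μ s ≤ stepK κ ν s + ENNReal.ofReal (c * tvDist μ ν) := by
  rw [stepK_apply κ μ hs, stepK_apply κ ν hs, ENNReal.ofReal_mul hc]
  exact lintegral_le_lintegral_add_mul_tvDist μ ν (fun x => measure_ne_top (κ x) s)
    fun x y => apply_le_add_of_tvDist_le (hκ x y) hs

lemma tvDist_stepK_le (hκ : ∀ x y, tvDist (κ x) (κ y) ≤ c)
    (μ ν : Measure X) [IsProbabilityMeasure μ] [IsProbabilityMeasure ν] :
    tvDist (stepK κ μ) (stepK κ ν) ≤ c * tvDist μ ν := by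
  have := nonempty_of_isProbabilityMeasure μ
  have hc := nonneg_of_forall_tvDist_le hκ
  refine tvDist_le_of_forall_apply_le_add (mul_nonneg hc (tvDist_nonneg μ ν))
    (fun s hs => stepK_apply_le_add hκ hc μ ν hs) fun s hs => ?_
  simpa only [tvDist_comm ν μ] using stepK_apply_le_add hκ hc ν μ hs

lemma tvDist_iterate_stepK_le (hκ : ∀ x y, tvDist (κ x) (κ y) ≤ c)
    (μ ν : Measure X) [IsProbabilityMeasure μ] [IsProbabilityMeasure ν] (n : ℕ) :
    tvDist ((stepK κ)^[n] μ) ((stepK κ)^[n] ν) ≤ c ^ n * tvDist μ ν := by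
  induction n generalizing μ ν with
  | zero => simp
  | succ n ih =>
    have := nonempty_of_isProbabilityMeasure μ
    calc tvDist ((stepK κ)^[n + 1] μ) ((stepK κ)^[n + 1] ν)
        ≤ c ^ n * tvDist (stepK κ μ) (stepK κ ν) := ih _ _
      _ ≤ c ^ n * (c * tvDist μ ν) := by
        gcongr
        · exact pow_nonneg (nonneg_of_forall_tvDist_le hκ) n
        · exact tvDist_stepK_le hκ μ ν
      _ = c ^ (n + 1) * tvDist μ ν := by ring

end

theorem doeblin_contraction_general {X : Type*} [MeasurableSpace X]
    (κ : Kernel X X) [IsMarkovKernel κ] (a : ℝ)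
    (hD : ∀ x y : X, tvDist (κ x) (κ y) ≤ 1 - a)
    (ν₁ ν₂ : Measure X) [IsProbabilityMeasure ν₁] [IsProbabilityMeasure ν₂] (n : ℕ) :
    tvDist ((stepK κ)^[n] ν₁) ((stepK κ)^[n] ν₂) ≤ (1 - a) ^ n * tvDist ν₁ ν₂ :=
  tvDist_iterate_stepK_le hD ν₁ ν₂ n

theorem doeblin_contraction {X : Type*} [TopologicalSpace X] [PolishSpace X]
    [MeasurableSpace X] [BorelSpace X]
    (κ : Kernel X X) [IsMarkovKernel κ] (a : ℝ) (ha : a ∈ Set.Ioo (0:ℝ) 1)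
    (hD : ∀ x y : X, tvDist (κ x) (κ y) ≤ 1 - a)
    (ν₁ ν₂ : Measure X) [IsProbabilityMeasure ν₁] [IsProbabilityMeasure ν₂] (n : ℕ) :
    tvDist ((stepK κ)^[n] ν₁) ((stepK κ)^[n] ν₂) ≤ (1 - a) ^ n * tvDist ν₁ ν₂ :=
  doeblin_contraction_general κ a hD ν₁ ν₂ n
end

section
/- For the two-state example with P = [[1−β, β],[β, 1−β]], P_ε = [[1−β+ε, β−ε],[β+ε, 1−β−ε]], μ = (1/2, 1/2), and ν_γ = (γ, 1−γ) with γ > 1/2, one has ‖μ − (1/n)Σ_{k=0}^{n−1} ν_γ P_ε^k‖_TV = ε/(α+ε) + (‖μ − ν_γ‖_TV − ε/(α+ε))·(1−(1−α−ε)^n)/((α+ε)n), where α + ε = 2β; i.e., the general ergodic-average total-variation bound is attained with equality. -/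
/-!
Write `π = b / (a + b)` for the stationary weight of the chain `!![1 - a, a; b, 1 - b]` and
`r = 1 - a - b` for its second eigenvalue. Started from `(x, 1 - x)`, the first coordinate after
`k` steps is `π + (x - π) r ^ k`, so the Cesàro average is `π + (x - π) t` with
`t = (1 - r ^ n) / ((a + b) n)`. For `P_ε` we have `π = 1/2 + ε/(α + ε)`, hence the averaged law
differs from `μ` in each coordinate by `ε/(α + ε) (1 - t) + (γ - 1/2) t`, which is nonnegative
because `t ∈ [0, 1]` by Bernoulli's inequality; on two points this gap is the total variation.
-/

open Matrix Finset

def twoStateMatrix (a b : ℝ) : Matrix (Fin 2) (Fin 2) ℝ := !![1 - a, a; b, 1 - b]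

lemma vecMul_twoStateMatrix (a b x : ℝ) :
    vecMul ![x, 1 - x] (twoStateMatrix a b)
      = ![b + (1 - a - b) * x, 1 - (b + (1 - a - b) * x)] := by
  ext i
  fin_cases i <;> simp [twoStateMatrix, vecMul, dotProduct, Fin.sum_univ_two] <;> ring

lemma vecMul_twoStateMatrix_pow (a b x : ℝ) (hab : a + b ≠ 0) (k : ℕ) :
    vecMul ![x, 1 - x] (twoStateMatrix a b ^ k)
      = ![b / (a + b) + (x - b / (a + b)) * (1 - a - b) ^ k,
          1 - (b / (a + b) + (x - b / (a + b)) * (1 - a - b) ^ k)] := by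
  induction k with
  | zero =>
    ext i
    fin_cases i <;> simp
  | succ k ih =>
    have step : b + (1 - a - b) * (b / (a + b) + (x - b / (a + b)) * (1 - a - b) ^ k)
        = b / (a + b) + (x - b / (a + b)) * (1 - a - b) ^ (k + 1) := by
      field_simp
      ring
    rw [pow_succ, ← vecMul_vecMul, ih, vecMul_twoStateMatrix, step]

lemma cesaro_vecMul_twoStateMatrix_pow (a b x : ℝ) (hab : a + b ≠ 0) {n : ℕ} (hn : n ≠ 0)
    (i : Fin 2) :
    (1 / (n : ℝ)) * ∑ k ∈ range n, vecMul ![x, 1 - x] (twoStateMatrix a b ^ k) i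
      = ![b / (a + b) + (x - b / (a + b)) * (1 - (1 - a - b) ^ n) / ((a + b) * n),
          1 - (b / (a + b) + (x - b / (a + b)) * (1 - (1 - a - b) ^ n) / ((a + b) * n))] i := by
  have hgeom : ∑ k ∈ range n, (1 - a - b) ^ k = (1 - (1 - a - b) ^ n) / (a + b) := by
    rw [geom_sum_eq (by contrapose! hab; linarith), show 1 - a - b - 1 = -(a + b) by ring,
      div_neg, ← neg_div, neg_sub]
  have hsum : ∑ k ∈ range n, (b / (a + b) + (x - b / (a + b)) * (1 - a - b) ^ k)
      = n * (b / (a + b)) + (x - b / (a + b)) * ((1 - (1 - a - b) ^ n) / (a + b)) := by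
    rw [sum_add_distrib, ← mul_sum, hgeom, sum_const, card_range, nsmul_eq_mul]
  have hn' : (n : ℝ) ≠ 0 := by exact_mod_cast hn
  simp_rw [vecMul_twoStateMatrix_pow a b x hab]
  fin_cases i
  · simp only [Fin.zero_eta, cons_val_zero, hsum]
    field_simp
  · simp only [Fin.mk_one, cons_val_one, cons_val_zero, sum_sub_distrib, hsum, sum_const,
      card_range, nsmul_eq_mul, mul_one]
    field_simp

lemma one_sub_pow_div_mem_Icc {s : ℝ} (hs0 : 0 < s) (hs1 : s ≤ 1) {n : ℕ} (hn : 0 < n) :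
    (1 - (1 - s) ^ n) / (s * n) ∈ Set.Icc 0 1 := by
  have hsn : 0 < s * n := by positivity
  have hpow : (1 - s) ^ n ≤ 1 := pow_le_one₀ (by linarith) (by linarith)
  have bernoulli : 1 + n * (-s) ≤ (1 - s) ^ n := by
    simpa [sub_eq_add_neg] using one_add_mul_le_pow (a := -s) (by linarith) n
  constructor
  · exact div_nonneg (by linarith) hsn.le
  · rw [div_le_one hsn]; linarith

lemma half_sum_abs_eq_of_add_eq_zero {f : Fin 2 → ℝ} (hf : f 0 + f 1 = 0) :
    1 / 2 * ∑ i, |f i| = |f 0| := by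
  rw [Fin.sum_univ_two, show f 1 = -f 0 by linarith, abs_neg]
  ring

theorem two_state_sharpness_general (β ε γ : ℝ) (hε : 0 < ε) (hεβ : ε < 2 * β) (hβ : β ≤ 1 / 2)
    (hγ : 1 / 2 < γ) (n : ℕ) (hn : 0 < n) :
    let α : ℝ := 2 * β - ε
    let Pε : Matrix (Fin 2) (Fin 2) ℝ := !![1 - β + ε, β - ε; β + ε, 1 - β - ε]
    let μv : Fin 2 → ℝ := ![1 / 2, 1 / 2]
    let ν : Fin 2 → ℝ := ![γ, 1 - γ]
    (1 / 2) * ∑ i : Fin 2,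
        |μv i - (1 / (n : ℝ)) * ∑ k ∈ Finset.range n, Matrix.vecMul ν (Pε ^ k) i|
      = ε / (α + ε)
        + ((γ - 1 / 2) - ε / (α + ε)) * (1 - (1 - α - ε) ^ n) / ((α + ε) * (n : ℝ)) := by
  intro α Pε μv ν
  have hPε : Pε = twoStateMatrix (β - ε) (β + ε) := by
    simp only [Pε, twoStateMatrix, sub_add, sub_sub]
  have hs : (β - ε) + (β + ε) = α + ε := by simp only [α]; ring
  have hr : 1 - (β - ε) - (β + ε) = 1 - α - ε := by simp only [α]; ring
  have hs0 : 0 < α + ε := by simp only [α]; linarith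
  have hab : (β - ε) + (β + ε) ≠ 0 := hs ▸ hs0.ne'
  have hπ : (β + ε) / (α + ε) = 1 / 2 + ε / (α + ε) := by
    field_simp; simp only [α]; ring
  obtain ⟨ht0, ht1⟩ := one_sub_pow_div_mem_Icc hs0 (by simp only [α]; linarith) hn
  rw [← sub_sub] at ht0 ht1
  simp only [hPε, ν, cesaro_vecMul_twoStateMatrix_pow _ _ γ hab hn.ne', hs, hr, hπ]
  rw [half_sum_abs_eq_of_add_eq_zero (by simp [μv]; ring)]
  simp only [μv, cons_val_zero, mul_div_assoc] at ht0 ht1 ⊢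
  have he : 0 ≤ ε / (α + ε) := by positivity
  rw [abs_of_nonpos (by nlinarith)]
  ring

theorem two_state_sharpness (β ε γ : ℝ) (hε : 0 < ε) (hεβ : ε < 2 * β) (hβ : β ≤ 1 / 2)
    (hγ : 1 / 2 < γ) (hγ1 : γ ≤ 1) (n : ℕ) (hn : 0 < n) :
    let α : ℝ := 2 * β - ε
    let Pε : Matrix (Fin 2) (Fin 2) ℝ := !![1 - β + ε, β - ε; β + ε, 1 - β - ε]
    let μv : Fin 2 → ℝ := ![1 / 2, 1 / 2]
    let ν : Fin 2 → ℝ := ![γ, 1 - γ]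
    (1 / 2) * ∑ i : Fin 2,
        |μv i - (1 / (n : ℝ)) * ∑ k ∈ Finset.range n, Matrix.vecMul ν (Pε ^ k) i|
      = ε / (α + ε)
        + ((γ - 1 / 2) - ε / (α + ε)) * (1 - (1 - α - ε) ^ n) / ((α + ε) * (n : ℝ)) :=
  two_state_sharpness_general β ε γ hε hεβ hβ hγ n hn
end

section
/- Under the Doeblin condition with constant a ∈ (0,1), for any bounded f and the Markov chain (X_k) with kernel P, the ergodic average satisfies E[((1/n)Σ_{k=0}^{n−1} f(X_k) − μf)²] ≤ (4|f|_*²/(a²n))·(2 + 8/n). -/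
open MeasureTheory ProbabilityTheory Filter
open scoped ENNReal

/-- `|f|_* = inf_λ sup_x |f x - λ|`. -/
noncomputable def fstar {X : Type*} (f : X → ℝ) : ℝ := ⨅ l : ℝ, ⨆ x, |f x - l|

/-
Let `g = f - μ f` and `P g = ∫ g dκ(·)`. By the Markov property,
`E[g(X_j) g(X_{j+d})] = E[g(X_j) (P^d g)(X_j)]`. Under the Doeblin condition each application
of `P` contracts the oscillation of a function by `1 - a` (compare the two integrals on a Hahn
set of `κ x - κ y`), and `μ (P^d g) = μ g = 0` by stationarity, so
`|P^d g| ≤ (1 - a)^d osc f ≤ 2 (1 - a)^d |f|_*`. Hence the covariances decay geometrically in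
`|j - k|`, and summing them gives `E[(average - μ f)^2] ≤ 8 |f|_*^2 / (a n)`.
-/

section Bounded

variable {α : Type*} [MeasurableSpace α] {μ : Measure α} {g : α → ℝ} {b : ℝ}

lemma integrable_of_abs_le [IsFiniteMeasure μ] (hg : Measurable g) (hb : ∀ x, |g x| ≤ b) :
    Integrable g μ :=
  Integrable.of_bound hg.aestronglyMeasurable b
    (ae_of_all _ fun x => (Real.norm_eq_abs _).trans_le (hb x))

lemma abs_integral_le_of_abs_le [IsProbabilityMeasure μ] (hb : ∀ x, |g x| ≤ b) :
    |∫ x, g x ∂μ| ≤ b := by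
  simpa using norm_integral_le_of_norm_le_const (μ := μ) (f := g)
    (ae_of_all _ fun x => (Real.norm_eq_abs _).trans_le (hb x))

end Bounded

section TotalVariation

variable {X : Type*} [MeasurableSpace X] {μ ν : Measure X}

lemma le_tvDist [IsProbabilityMeasure μ] [IsProbabilityMeasure ν] {s : Set X}
    (hs : MeasurableSet s) : |μ.real s - ν.real s| ≤ tvDist μ ν := by
  refine le_ciSup
    (f := fun s : {s : Set X // MeasurableSet s} => |(μ s.1).toReal - (ν s.1).toReal|) ⟨1, ?_⟩
    ⟨s, hs⟩
  rintro _ ⟨t, rfl⟩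
  exact abs_sub_le_of_nonneg_of_le (measureReal_nonneg (μ := μ)) measureReal_le_one
    (measureReal_nonneg (μ := ν)) measureReal_le_one

/-- On a Hahn set `s` of `μ - ν`, the nonnegative `g ≤ c` gains at most `c (μ s - ν s)`;
off it, it can only lose. -/
lemma integral_sub_integral_le_mul_tvDist [IsProbabilityMeasure μ] [IsProbabilityMeasure ν]
    {g : X → ℝ} (hg : Measurable g) {c : ℝ} (hg0 : ∀ x, 0 ≤ g x) (hgc : ∀ x, g x ≤ c) :
    ∫ x, g x ∂μ - ∫ x, g x ∂ν ≤ c * tvDist μ ν := by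
  obtain ⟨s, hs, hνμ, hμν⟩ := hahn_decomposition μ ν
  have hle_s : ν.restrict s ≤ μ.restrict s := Measure.le_iff.2 fun t ht => by
    simp only [Measure.restrict_apply ht]; exact hνμ _ (ht.inter hs) Set.inter_subset_right
  have hle_sc : μ.restrict sᶜ ≤ ν.restrict sᶜ := Measure.le_iff.2 fun t ht => by
    simp only [Measure.restrict_apply ht]; exact hμν _ (ht.inter hs.compl) Set.inter_subset_right
  have hgi : ∀ {ρ : Measure X} [IsFiniteMeasure ρ], Integrable g ρ :=
    integrable_of_abs_le hg fun x => (abs_of_nonneg (hg0 x)).trans_le (hgc x)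
  have hoff : ∫ x in sᶜ, g x ∂μ ≤ ∫ x in sᶜ, g x ∂ν :=
    integral_mono_measure hle_sc (ae_of_all _ hg0) hgi
  have hon : ∫ x in s, (c - g x) ∂ν ≤ ∫ x in s, (c - g x) ∂μ :=
    integral_mono_measure hle_s (ae_of_all _ fun x => sub_nonneg.2 (hgc x))
      ((integrable_const c).sub hgi)
  rw [integral_sub (integrable_const c) hgi, integral_sub (integrable_const c) hgi,
    setIntegral_const, setIntegral_const, smul_eq_mul, smul_eq_mul] at hon
  rw [← integral_add_compl hs (μ := μ) hgi, ← integral_add_compl hs (μ := ν) hgi]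
  have hc : 0 ≤ c := (hg0 _).trans (hgc (nonempty_of_isProbabilityMeasure μ).some)
  have hmass : μ.real s - ν.real s ≤ tvDist μ ν := (le_abs_self _).trans (le_tvDist hs)
  nlinarith [mul_le_mul_of_nonneg_left hmass hc]

end TotalVariation

section MarkovOperator

variable {X : Type*} [MeasurableSpace X] {κ : Kernel X X} [IsMarkovKernel κ] {g : X → ℝ}
  {a b c : ℝ}

noncomputable def markovOp (κ : Kernel X X) (g : X → ℝ) (x : X) : ℝ := ∫ y, g y ∂κ x

lemma measurable_markovOp (hg : Measurable g) : Measurable (markovOp κ g) :=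
  StronglyMeasurable.integral_kernel_prod_right (f := fun _ y => g y)
    (hg.comp measurable_snd).stronglyMeasurable |>.measurable

lemma abs_markovOp_le (hb : ∀ x, |g x| ≤ b) (x : X) : |markovOp κ g x| ≤ b :=
  abs_integral_le_of_abs_le hb

lemma abs_markovOp_sub_le (hD : ∀ x y, tvDist (κ x) (κ y) ≤ 1 - a) (hg : Measurable g)
    (hb : ∀ x, |g x| ≤ b) (hosc : ∀ x y, |g x - g y| ≤ c) (x y : X) :
    |markovOp κ g x - markovOp κ g y| ≤ (1 - a) * c := by
  have : Nonempty X := ⟨x⟩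
  have hc : 0 ≤ c := (abs_nonneg _).trans (hosc x x)
  -- shifting `g` by its infimum makes it take values in `[0, c]`
  set m := ⨅ z, g z
  have hbdd : BddBelow (Set.range g) := ⟨-b, by rintro _ ⟨z, rfl⟩; exact (abs_le.1 (hb z)).1⟩
  have hm_le : ∀ z, m ≤ g z := ciInf_le hbdd
  have hle_m : ∀ z, g z - c ≤ m := fun z =>
    le_ciInf fun w => by linarith [(abs_le.1 (hosc z w)).2]
  have hshift : ∀ u v, markovOp κ g u - markovOp κ g v
      = ∫ z, (g z - m) ∂κ u - ∫ z, (g z - m) ∂κ v := fun u v => by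
    simp only [markovOp, integral_sub (integrable_of_abs_le hg hb) (integrable_const m),
      integral_const, probReal_univ, one_smul]
    ring
  have hone_sided : ∀ u v, markovOp κ g u - markovOp κ g v ≤ (1 - a) * c := fun u v => by
    rw [hshift]
    calc ∫ z, (g z - m) ∂κ u - ∫ z, (g z - m) ∂κ v ≤ c * tvDist (κ u) (κ v) :=
          integral_sub_integral_le_mul_tvDist (g := fun z => g z - m) (hg.sub measurable_const)
            (fun z => sub_nonneg.2 (hm_le z)) (fun z => by linarith [hle_m z])
      _ ≤ (1 - a) * c := by rw [mul_comm]; exact mul_le_mul_of_nonneg_right (hD u v) hc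
  exact abs_sub_le_iff.2 ⟨hone_sided x y, hone_sided y x⟩

lemma integral_bind_eq_integral_markovOp {ν : Measure X} [IsFiniteMeasure ν]
    (hg : Measurable g) (hb : ∀ x, |g x| ≤ b) :
    ∫ x, g x ∂(ν.bind κ) = ∫ x, markovOp κ g x ∂ν := by
  rw [← Measure.snd_compProd ν κ, Measure.snd,
    integral_map measurable_snd.aemeasurable hg.aestronglyMeasurable,
    Measure.integral_compProd (f := fun p => g p.2)
      (integrable_of_abs_le (hg.comp measurable_snd) fun p => hb p.2)]
  rfl

lemma measurable_iterate_markovOp (hg : Measurable g) (d : ℕ) :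
    Measurable ((markovOp κ)^[d] g) := by
  induction d with
  | zero => exact hg
  | succ d ih => rw [Function.iterate_succ_apply']; exact measurable_markovOp ih

lemma abs_iterate_markovOp_le (hb : ∀ x, |g x| ≤ b) (d : ℕ) (x : X) :
    |(markovOp κ)^[d] g x| ≤ b := by
  induction d generalizing x with
  | zero => exact hb x
  | succ d ih => rw [Function.iterate_succ_apply']; exact abs_markovOp_le ih x

lemma abs_iterate_markovOp_sub_le (hD : ∀ x y, tvDist (κ x) (κ y) ≤ 1 - a) (hg : Measurable g)
    (hb : ∀ x, |g x| ≤ b) (hosc : ∀ x y, |g x - g y| ≤ c) (d : ℕ) (x y : X) :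
    |(markovOp κ)^[d] g x - (markovOp κ)^[d] g y| ≤ (1 - a) ^ d * c := by
  induction d generalizing x y with
  | zero => simpa using hosc x y
  | succ d ih =>
    simp only [Function.iterate_succ_apply', pow_succ', mul_assoc]
    exact abs_markovOp_sub_le hD (measurable_iterate_markovOp hg d)
      (abs_iterate_markovOp_le hb d) ih x y

lemma integral_iterate_markovOp {μ : Measure X} [IsProbabilityMeasure μ] (hμ : μ.bind κ = μ)
    (hg : Measurable g) (hb : ∀ x, |g x| ≤ b) (d : ℕ) :
    ∫ x, (markovOp κ)^[d] g x ∂μ = ∫ x, g x ∂μ := by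
  induction d with
  | zero => rfl
  | succ d ih =>
    rw [Function.iterate_succ_apply', ← integral_bind_eq_integral_markovOp
      (measurable_iterate_markovOp hg d) (abs_iterate_markovOp_le hb d), hμ, ih]

lemma abs_iterate_markovOp_sub_integral_le (hD : ∀ x y, tvDist (κ x) (κ y) ≤ 1 - a)
    {μ : Measure X} [IsProbabilityMeasure μ] (hμ : μ.bind κ = μ) (hg : Measurable g)
    (hb : ∀ x, |g x| ≤ b) (hosc : ∀ x y, |g x - g y| ≤ c) (d : ℕ) (x : X) :
    |(markovOp κ)^[d] g x - ∫ y, g y ∂μ| ≤ (1 - a) ^ d * c := by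
  set h := (markovOp κ)^[d] g
  have hmean : h x - ∫ y, g y ∂μ = ∫ y, (h x - h y) ∂μ := by
    rw [← integral_iterate_markovOp hμ hg hb d, integral_sub (integrable_const _)
      (integrable_of_abs_le (measurable_iterate_markovOp hg d) (abs_iterate_markovOp_le hb d)),
      integral_const, probReal_univ, one_smul]
  rw [hmean]
  exact abs_integral_le_of_abs_le (abs_iterate_markovOp_sub_le hD hg hb hosc d x)

end MarkovOperator

lemma sum_range_pow_dist_le {r : ℝ} (h0 : 0 ≤ r) (h1 : r < 1) (j n : ℕ) :
    ∑ k ∈ Finset.range n, r ^ Nat.dist j k ≤ 2 / (1 - r) := by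
  have hgeom : ∀ m, ∑ k ∈ Finset.range m, r ^ k ≤ 1 / (1 - r) := fun m => by
    rw [one_div, ← tsum_geometric_of_lt_one h0 h1]
    exact (summable_geometric_of_lt_one h0 h1).sum_le_tsum _ fun i _ => pow_nonneg h0 i
  have hbelow : ∑ k ∈ Finset.range j, r ^ Nat.dist j k ≤ 1 / (1 - r) := by
    rw [← Finset.sum_range_reflect]
    refine le_trans (Finset.sum_le_sum fun k hk => ?_) (hgeom j)
    rw [Finset.mem_range] at hk
    exact pow_le_pow_of_le_one h0 h1.le (by simp only [Nat.dist]; omega)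
  have habove : ∑ k ∈ Finset.Ico j (max j n), r ^ Nat.dist j k ≤ 1 / (1 - r) := by
    rw [Finset.sum_Ico_eq_sum_range]
    refine le_of_eq_of_le (Finset.sum_congr rfl fun k _ => ?_) (hgeom _)
    congr 1; simp only [Nat.dist]; omega
  calc ∑ k ∈ Finset.range n, r ^ Nat.dist j k
      ≤ ∑ k ∈ Finset.range (max j n), r ^ Nat.dist j k :=
        Finset.sum_le_sum_of_subset_of_nonneg (Finset.range_mono (le_max_right j n))
          fun k _ _ => pow_nonneg h0 _
    _ = ∑ k ∈ Finset.range j, r ^ Nat.dist j k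
          + ∑ k ∈ Finset.Ico j (max j n), r ^ Nat.dist j k :=
        (Finset.sum_range_add_sum_Ico _ (le_max_left j n)).symm
    _ ≤ 1 / (1 - r) + 1 / (1 - r) := add_le_add hbelow habove
    _ = 2 / (1 - r) := by ring

section MarkovChain

variable {X Ω : Type*} [MeasurableSpace X] {mΩ : MeasurableSpace Ω}

structure IsMarkovChain (κ : Kernel X X) (Pr : Measure Ω) (Xc : ℕ → Ω → X)
    (𝓕 : Filtration ℕ mΩ) : Prop where
  adapted : ∀ n, Measurable[𝓕 n] (Xc n)
  condExp_indicator : ∀ (n : ℕ) (A : Set X), MeasurableSet A →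
    Pr[fun ω => Set.indicator A (fun _ => (1 : ℝ)) (Xc (n + 1) ω) | 𝓕 n]
      =ᵐ[Pr] fun ω => ((κ (Xc n ω)) A).toReal

namespace IsMarkovChain

variable {κ : Kernel X X} {Pr : Measure Ω} {Xc : ℕ → Ω → X} {𝓕 : Filtration ℕ mΩ}

lemma measurable (hX : IsMarkovChain κ Pr Xc 𝓕) (n : ℕ) : Measurable (Xc n) :=
  (hX.adapted n).mono (𝓕.le n) le_rfl

variable [IsMarkovKernel κ] {g : X → ℝ} {a b c : ℝ}

section FiniteMeasure

variable [IsFiniteMeasure Pr]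

lemma map_restrict_succ (hX : IsMarkovChain κ Pr Xc 𝓕) {n : ℕ} {B : Set Ω}
    (hB : MeasurableSet[𝓕 n] B) :
    (Pr.restrict B).map (Xc (n + 1)) = ((Pr.restrict B).map (Xc n)).bind κ := by
  ext A hA
  have hpre : MeasurableSet (Xc (n + 1) ⁻¹' A) := hX.measurable (n + 1) hA
  have hind : Integrable (fun ω => A.indicator (fun _ => (1 : ℝ)) (Xc (n + 1) ω)) Pr :=
    integrable_of_abs_le (b := 1) ((measurable_const.indicator hA).comp (hX.measurable (n + 1)))
      fun ω => by by_cases h : Xc (n + 1) ω ∈ A <;> simp [h]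
  have hset := setIntegral_condExp (𝓕.le n) hind hB
  rw [setIntegral_congr_ae (𝓕.le n B hB) ((hX.condExp_indicator n A hA).mono
    fun ω h _ => h)] at hset
  rw [Measure.map_apply (hX.measurable (n + 1)) hA, Measure.bind_apply hA κ.aemeasurable,
    lintegral_map (κ.measurable_coe hA) (hX.measurable n)]
  have hL : ∫ ω in B, A.indicator (fun _ => (1 : ℝ)) (Xc (n + 1) ω) ∂Pr
      = (Pr.restrict B).real (Xc (n + 1) ⁻¹' A) := by
    rw [← integral_indicator_one hpre]; rfl
  have hR : ∫⁻ ω in B, κ (Xc n ω) A ∂Pr = ENNReal.ofReal (∫ ω in B, (κ (Xc n ω) A).toReal ∂Pr) := by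
    rw [ofReal_integral_eq_lintegral_ofReal ?_ (ae_of_all _ fun _ => ENNReal.toReal_nonneg)]
    · simp only [ENNReal.ofReal_toReal (measure_ne_top _ _)]
    · exact integrable_of_abs_le (b := 1)
        ((κ.measurable_coe hA).comp (hX.measurable n)).ennreal_toReal
        fun ω => by rw [abs_of_nonneg ENNReal.toReal_nonneg]; exact measureReal_le_one
  rw [hR, hset, hL, ofReal_measureReal]

lemma setIntegral_comp_succ (hX : IsMarkovChain κ Pr Xc 𝓕) {n : ℕ} {B : Set Ω}
    (hB : MeasurableSet[𝓕 n] B) (hg : Measurable g) (hb : ∀ x, |g x| ≤ b) :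
    ∫ ω in B, g (Xc (n + 1) ω) ∂Pr = ∫ ω in B, markovOp κ g (Xc n ω) ∂Pr := by
  rw [← integral_map (hX.measurable (n + 1)).aemeasurable hg.aestronglyMeasurable,
    hX.map_restrict_succ hB, integral_bind_eq_integral_markovOp hg hb,
    integral_map (hX.measurable n).aemeasurable (measurable_markovOp hg).aestronglyMeasurable]

lemma setIntegral_comp_add (hX : IsMarkovChain κ Pr Xc 𝓕) {n : ℕ} {B : Set Ω}
    (hB : MeasurableSet[𝓕 n] B) (hg : Measurable g) (hb : ∀ x, |g x| ≤ b) (d : ℕ) :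
    ∫ ω in B, g (Xc (n + d) ω) ∂Pr = ∫ ω in B, (markovOp κ)^[d] g (Xc n ω) ∂Pr := by
  induction d generalizing g with
  | zero => rfl
  | succ d ih =>
    rw [← add_assoc, hX.setIntegral_comp_succ (𝓕.mono (Nat.le_add_right n d) B hB) hg hb,
      ih (measurable_markovOp hg) (abs_markovOp_le hb), Function.iterate_succ_apply]

lemma condExp_comp_add (hX : IsMarkovChain κ Pr Xc 𝓕) (n d : ℕ) (hg : Measurable g)
    (hb : ∀ x, |g x| ≤ b) :
    Pr[fun ω => g (Xc (n + d) ω) | 𝓕 n] =ᵐ[Pr] fun ω => (markovOp κ)^[d] g (Xc n ω) := by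
  have hPg := measurable_iterate_markovOp (κ := κ) hg d
  refine (ae_eq_condExp_of_forall_setIntegral_eq (𝓕.le n) ?_ (fun B _ _ => ?_)
    (fun B hB _ => (hX.setIntegral_comp_add hB hg hb d).symm) ?_).symm
  · exact integrable_of_abs_le (hg.comp (hX.measurable _)) fun ω => hb _
  · exact (integrable_of_abs_le (hPg.comp (hX.measurable n))
      fun ω => abs_iterate_markovOp_le hb d _).integrableOn
  · exact (hPg.comp (hX.adapted n)).aestronglyMeasurable

lemma integral_mul_comp_add (hX : IsMarkovChain κ Pr Xc 𝓕) {n : ℕ} (d : ℕ) {W : Ω → ℝ}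
    (hW : StronglyMeasurable[𝓕 n] W) (hWc : ∀ ω, |W ω| ≤ c) (hg : Measurable g)
    (hb : ∀ x, |g x| ≤ b) :
    ∫ ω, W ω * g (Xc (n + d) ω) ∂Pr = ∫ ω, W ω * (markovOp κ)^[d] g (Xc n ω) ∂Pr := by
  have hpull := condExp_stronglyMeasurable_mul_of_bound (μ := Pr) (𝓕.le n) hW
    (integrable_of_abs_le (hg.comp (hX.measurable (n + d))) fun ω => hb _) c (ae_of_all _ hWc)
  rw [← integral_condExp (𝓕.le n)]
  refine integral_congr_ae (hpull.trans ?_)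
  filter_upwards [hX.condExp_comp_add n d hg hb] with ω hω
  exact congrArg (W ω * ·) hω

end FiniteMeasure

variable [IsProbabilityMeasure Pr] {μ : Measure X} [IsProbabilityMeasure μ]

lemma integral_mul_comp_add_le (hX : IsMarkovChain κ Pr Xc 𝓕)
    (hD : ∀ x y, tvDist (κ x) (κ y) ≤ 1 - a) (hμ : μ.bind κ = μ) (hg : Measurable g)
    (hb : ∀ x, |g x| ≤ b) (hmean : ∫ x, g x ∂μ = 0) (hosc : ∀ x y, |g x - g y| ≤ c)
    (j d : ℕ) :
    ∫ ω, g (Xc j ω) * g (Xc (j + d) ω) ∂Pr ≤ (1 - a) ^ d * c ^ 2 := by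
  have hdecay : ∀ d x, |(markovOp κ)^[d] g x| ≤ (1 - a) ^ d * c := fun d x => by
    simpa [hmean] using abs_iterate_markovOp_sub_integral_le hD hμ hg hb hosc d x
  have hgc : ∀ x, |g x| ≤ c := fun x => by simpa using hdecay 0 x
  rw [hX.integral_mul_comp_add d (W := fun ω => g (Xc j ω))
    (hg.comp (hX.adapted j)).stronglyMeasurable (fun ω => hgc _) hg hb]
  refine (le_abs_self _).trans (abs_integral_le_of_abs_le fun ω => ?_)
  rw [abs_mul, sq, ← mul_assoc, mul_comm _ c]
  exact mul_le_mul (hgc _) (hdecay d _) (abs_nonneg _) ((abs_nonneg _).trans (hgc (Xc j ω)))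

lemma integral_sq_average_sub_le (hX : IsMarkovChain κ Pr Xc 𝓕) (ha0 : 0 < a) (ha1 : a ≤ 1)
    (hD : ∀ x y, tvDist (κ x) (κ y) ≤ 1 - a) (hμ : μ.bind κ = μ) (hg : Measurable g)
    (hb : ∀ x, |g x| ≤ b) (hosc : ∀ x y, |g x - g y| ≤ c) {n : ℕ} (hn : 0 < n) :
    ∫ ω, ((1 / (n : ℝ)) * ∑ k ∈ Finset.range n, g (Xc k ω) - ∫ x, g x ∂μ) ^ 2 ∂Pr
      ≤ 2 * c ^ 2 / (a * n) := by
  set m := ∫ x, g x ∂μ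
  set g₀ : X → ℝ := fun x => g x - m
  have hg₀ : Measurable g₀ := hg.sub measurable_const
  have hb₀ : ∀ x, |g₀ x| ≤ b + b := fun x =>
    (abs_sub _ _).trans (add_le_add (hb x) (abs_integral_le_of_abs_le hb))
  have hmean₀ : ∫ x, g₀ x ∂μ = 0 := by
    simp [g₀, m, integral_sub (integrable_of_abs_le hg hb) (integrable_const m)]
  have hosc₀ : ∀ x y, |g₀ x - g₀ y| ≤ c := fun x y => by
    simpa [g₀, sub_sub_sub_cancel_right] using hosc x y
  have hcov : ∀ j k, ∫ ω, g₀ (Xc j ω) * g₀ (Xc k ω) ∂Pr ≤ (1 - a) ^ Nat.dist j k * c ^ 2 := by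
    intro j k
    rcases le_total j k with hjk | hkj
    · rw [Nat.dist_eq_sub_of_le hjk]
      simpa [Nat.add_sub_cancel' hjk] using
        hX.integral_mul_comp_add_le hD hμ hg₀ hb₀ hmean₀ hosc₀ j (k - j)
    · rw [Nat.dist_eq_sub_of_le_right hkj]
      simpa [mul_comm, Nat.add_sub_cancel' hkj] using
        hX.integral_mul_comp_add_le hD hμ hg₀ hb₀ hmean₀ hosc₀ k (j - k)
  have hint : ∀ j k, Integrable (fun ω => g₀ (Xc j ω) * g₀ (Xc k ω)) Pr := fun j k =>
    integrable_of_abs_le (g := fun ω => g₀ (Xc j ω) * g₀ (Xc k ω)) (b := (b + b) * (b + b))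
      ((hg₀.comp (hX.measurable j)).mul (hg₀.comp (hX.measurable k))) fun ω => by
        rw [abs_mul]
        exact mul_le_mul (hb₀ _) (hb₀ _) (abs_nonneg _) ((abs_nonneg _).trans (hb₀ (Xc j ω)))
  have hexpand : ∀ ω, ((1 / (n : ℝ)) * ∑ k ∈ Finset.range n, g (Xc k ω) - m) ^ 2
      = (1 / (n : ℝ)) ^ 2 * ∑ j ∈ Finset.range n, ∑ k ∈ Finset.range n,
          g₀ (Xc j ω) * g₀ (Xc k ω) := fun ω => by
    rw [← Finset.sum_mul_sum, ← sq, ← mul_pow, Finset.sum_sub_distrib, Finset.sum_const,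
      Finset.card_range, nsmul_eq_mul]
    field_simp
  have hrow : ∀ j, ∑ k ∈ Finset.range n, (1 - a) ^ Nat.dist j k * c ^ 2 ≤ 2 / a * c ^ 2 :=
    fun j => by
      rw [← Finset.sum_mul]
      refine mul_le_mul_of_nonneg_right ?_ (sq_nonneg c)
      simpa using sum_range_pow_dist_le (by linarith : (0 : ℝ) ≤ 1 - a) (by linarith) j n
  calc ∫ ω, ((1 / (n : ℝ)) * ∑ k ∈ Finset.range n, g (Xc k ω) - m) ^ 2 ∂Pr
      = (1 / (n : ℝ)) ^ 2 * ∑ j ∈ Finset.range n, ∑ k ∈ Finset.range n,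
          ∫ ω, g₀ (Xc j ω) * g₀ (Xc k ω) ∂Pr := by
        simp_rw [hexpand, integral_const_mul]
        rw [integral_finsetSum _ fun j _ => integrable_finsetSum _ fun k _ => hint j k]
        simp_rw [integral_finsetSum _ fun k _ => hint _ k]
    _ ≤ (1 / (n : ℝ)) ^ 2 * ∑ j ∈ Finset.range n, 2 / a * c ^ 2 := by
        gcongr with j
        exact (Finset.sum_le_sum fun k _ => hcov j k).trans (hrow j)
    _ = 2 * c ^ 2 / (a * n) := by
        rw [Finset.sum_const, Finset.card_range, nsmul_eq_mul]
        field_simp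

end IsMarkovChain

end MarkovChain

lemma abs_sub_le_two_mul_fstar {X : Type*} {f : X → ℝ} {C : ℝ} (hC : ∀ x, |f x| ≤ C)
    (x y : X) : |f x - f y| ≤ 2 * fstar f := by
  have hsup : ∀ l, |f x - f y| / 2 ≤ ⨆ z, |f z - l| := fun l => by
    have hbdd : BddAbove (Set.range fun z => |f z - l|) :=
      ⟨C + |l|, by rintro _ ⟨z, rfl⟩; exact (abs_sub _ _).trans (by linarith [hC z])⟩
    have htri := abs_sub_le (f x) l (f y)
    rw [abs_sub_comm l] at htri
    linarith [le_ciSup hbdd x, le_ciSup hbdd y]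
  linarith [le_ciInf hsup, show fstar f = ⨅ l, ⨆ z, |f z - l| from rfl]

theorem ergodic_average_L2_bound {X : Type*} [TopologicalSpace X] [PolishSpace X]
    [MeasurableSpace X] [BorelSpace X]
    (κ : Kernel X X) [IsMarkovKernel κ] (a : ℝ) (ha : a ∈ Set.Ioo (0:ℝ) 1)
    (hD : ∀ x y : X, tvDist (κ x) (κ y) ≤ 1 - a)
    (μ : Measure X) [IsProbabilityMeasure μ] (hμ : stepK κ μ = μ)
    {Ω : Type*} [mΩ : MeasurableSpace Ω] (Pr : Measure Ω) [IsProbabilityMeasure Pr]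
    (Xc : ℕ → Ω → X) (𝓕 : Filtration ℕ mΩ) (hadapt : StronglyAdapted 𝓕 Xc)
    (hmark : ∀ (n : ℕ) (A : Set X), MeasurableSet A →
      (Pr[fun ω => Set.indicator A (fun _ => (1 : ℝ)) (Xc (n + 1) ω) | 𝓕 n]
        =ᵐ[Pr] fun ω => ((κ (Xc n ω)) A).toReal))
    (f : X → ℝ) (hf : Measurable f) (C : ℝ) (hC : ∀ x, |f x| ≤ C)
    (n : ℕ) (hn : 0 < n) :
    ∫ ω, ((1 / (n : ℝ)) * ∑ k ∈ Finset.range n, f (Xc k ω) - ∫ x, f x ∂μ) ^ 2 ∂Pr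
      ≤ (4 * (fstar f) ^ 2 / (a ^ 2 * (n : ℝ))) * (2 + 8 / (n : ℝ)) := by
  obtain ⟨ha0, ha1⟩ := ha
  have hX : IsMarkovChain κ Pr Xc 𝓕 := ⟨fun n => (hadapt n).measurable, hmark⟩
  have hn' : (0 : ℝ) < n := Nat.cast_pos.2 hn
  calc _ ≤ 2 * (2 * fstar f) ^ 2 / (a * n) :=
        hX.integral_sq_average_sub_le ha0 ha1.le hD hμ hf hC (abs_sub_le_two_mul_fstar hC) hn
    _ = 4 * fstar f ^ 2 / (a ^ 2 * n) * (2 * a) := by field_simp; ring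
    _ ≤ 4 * fstar f ^ 2 / (a ^ 2 * n) * (2 + 8 / n) := by
        gcongr
        linarith [show (0 : ℝ) ≤ 8 / n by positivity]
end
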